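/- Let h : ℝ → ℝ be nondecreasing, 1-Lipschitz, with |h(x)| ≤ min(|x|, 1) for all x and h(x) = x for |x| ≤ δ for some δ > 0. Let π be a Borel measure on (0,∞) with ∫ min(r, r²) π(dr) < ∞, and for each a > 0 let ν^{(a)} be a Borel measure on (0,∞) supported on (0,a] with ∫ r² ν^{(a)}(dr) < ∞, satisfying Assumption (H): min(r, r²) ν^{(a)}(dr) converges weakly, as finite measures, to min(r, r²) π(dr) as a → ∞. For 0 ≤ y ≤ a define β_a(y) = −∫ ν^{(a)}(dr) ∫_0^a du [ r(1_{u ≤ y} − y/a) − h(r(1_{u ≤ y} − y/a)) ]. Then: (i) |β_a(y)| ≤ 2 y ∫ ν^{(a)}(dr) r 1_{r > δ} for every 0 ≤ y ≤ a; and (ii) for every M > 0, sup_{0 ≤ y ≤ M} | β_a(y) + y ∫ π(dr) (r − h(r)) | → 0 as a → ∞. -/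

import Mathlib

/-!
Put `F x = x - h x`. As `h` is monotone and 1-Lipschitz, `F` is 1-Lipschitz, and it vanishes on
`[-δ, δ]`; hence `|F (r s)| ≤ |s| r 1_{r > L}` whenever `|s| L ≤ δ`. Splitting the `u`-integral at
`y` gives, with `t = y / a`,
`β_a(y) = -(y ∫ F(r(1 - t)) ν(dr) + (a - y) ∫ F(-r t) ν(dr))`,
so both terms are bounded by first moments of `ν` beyond a threshold, which gives (i).

For (ii), `β_a(y) + y ∫ F dπ` splits into `y (∫ F dπ - ∫ F dν)`, a Lipschitz error of size
`(M² / a) ∫_{r > δ} r ν(dr)` and a tail term of size `M ∫_{r > δ a / M} r ν(dr)`. Assumption (H)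
controls all three: applied to the bounded continuous function `F(r) / min(r, r²)` it gives
`∫ F dν^{(a)} → ∫ F dπ`; applied to `1` it bounds `∫_{r > δ} r ν^{(a)}(dr)`; applied to continuous
ramps, together with dominated convergence for `π`, it makes `∫_{r > L} r ν^{(a)}(dr)` small
uniformly in large `a` once `L` is large.
-/

open MeasureTheory Filter

/-- The drift characteristic (with truncation function `h`) of the rescaled
generalized Fleming-Viot process associated with the measure `ν` on `(0,a]`:
`β_a(y) = -∫ ν(dr) ∫_0^a du [ r(1_{u≤y} - y/a) - h(r(1_{u≤y} - y/a)) ]`. -/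
noncomputable def betaChar (h : ℝ → ℝ) (ν : Measure ℝ) (a y : ℝ) : ℝ :=
  -∫ r, (∫ u in Set.Ioc (0 : ℝ) a,
      (r * ((if u ≤ y then (1 : ℝ) else 0) - y / a)
        - h (r * ((if u ≤ y then (1 : ℝ) else 0) - y / a)))) ∂ν

open Set Topology

theorem LipschitzWith.id_sub_of_monotone {h : ℝ → ℝ} (h_mono : Monotone h)
    (h_lip : LipschitzWith 1 h) : LipschitzWith 1 (fun x => x - h x) := by
  refine LipschitzWith.of_dist_le_mul fun x z => ?_
  wlog hxz : x ≤ z generalizing x z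
  · rw [dist_comm, dist_comm x]; exact this z x (le_of_not_ge hxz)
  have hh : |h x - h z| ≤ |x - z| := by simpa [Real.dist_eq] using h_lip.dist_le_mul x z
  rw [abs_of_nonpos (sub_nonpos.2 hxz), abs_of_nonpos (sub_nonpos.2 (h_mono hxz))] at hh
  rw [Real.dist_eq, Real.dist_eq, NNReal.coe_one, one_mul, abs_of_nonpos (sub_nonpos.2 hxz),
    abs_le]
  constructor <;> linarith [h_mono hxz]

theorem indicator_Ioi_id_le_min_div {δ r : ℝ} (hδ : 0 < δ) (hr : 0 ≤ r) :
    (Ioi δ).indicator id r ≤ min r (r ^ 2) / min 1 δ := by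
  have hc : 0 < min 1 δ := lt_min one_pos hδ
  rcases le_or_gt r δ with hrδ | hrδ
  · rw [indicator_of_notMem (show r ∉ Ioi δ from not_lt.2 hrδ)]
    exact div_nonneg (le_min hr (sq_nonneg r)) hc.le
  · rw [indicator_of_mem (show r ∈ Ioi δ from hrδ), id, le_div_iff₀ hc]
    exact le_min (by nlinarith [min_le_left 1 δ]) (by nlinarith [min_le_right 1 δ])

theorem integrable_indicator_Ioi_id {μ : Measure ℝ} {L : ℝ} (hL : 0 < L)
    (hsq : Integrable (fun r => r ^ 2) μ) : Integrable ((Ioi L).indicator id) μ := by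
  refine (hsq.div_const L).mono' (measurable_id.indicator measurableSet_Ioi).aestronglyMeasurable
    (ae_of_all _ fun r => ?_)
  rw [Real.norm_eq_abs, le_div_iff₀ hL]
  rcases le_or_gt r L with hrL | hrL
  · rw [indicator_of_notMem (show r ∉ Ioi L from not_lt.2 hrL), abs_zero, zero_mul]
    positivity
  · rw [indicator_of_mem (show r ∈ Ioi L from hrL), id, abs_of_pos (hL.trans hrL), sq]
    exact mul_le_mul_of_nonneg_left hrL.le (hL.trans hrL).le

theorem integrable_min_sq {μ : Measure ℝ} (hμ : ∀ᵐ r ∂μ, 0 ≤ r)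
    (hsq : Integrable (fun r => r ^ 2) μ) : Integrable (fun r => min r (r ^ 2)) μ :=
  hsq.mono' (by fun_prop) (hμ.mono fun r hr => by
    rw [Real.norm_eq_abs, abs_of_nonneg (le_min hr (sq_nonneg r))]
    exact min_le_right _ _)

theorem integrable_sq_of_lintegral_lt_top {μ : Measure ℝ}
    (h : ∫⁻ r, ENNReal.ofReal (r ^ 2) ∂μ < ⊤) : Integrable (fun r => r ^ 2) μ :=
  (lintegral_ofReal_ne_top_iff_integrable (by fun_prop) (ae_of_all _ fun r => sq_nonneg r)).1 h.ne

theorem integrableOn_Ioi_min_sq_of_lintegral_lt_top {μ : Measure ℝ}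
    (h : ∫⁻ r, ENNReal.ofReal (min r (r ^ 2)) ∂μ < ⊤) :
    IntegrableOn (fun r => min r (r ^ 2)) (Ioi 0) μ :=
  (lintegral_ofReal_ne_top_iff_integrable (by fun_prop)
    ((ae_restrict_mem measurableSet_Ioi).mono fun r hr => le_min (le_of_lt hr) (sq_nonneg r))).1
    (ne_top_of_le_ne_top h.ne (setLIntegral_le_lintegral _ _))

def ramp (K r : ℝ) : ℝ := min 1 (max 0 (r - K))

theorem continuous_ramp (K : ℝ) : Continuous (ramp K) := by unfold ramp; fun_prop

theorem ramp_nonneg (K r : ℝ) : 0 ≤ ramp K r := le_min zero_le_one (le_max_left _ _)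

theorem ramp_le_one (K r : ℝ) : ramp K r ≤ 1 := min_le_left _ _

theorem ramp_of_le {K r : ℝ} (hr : r ≤ K) : ramp K r = 0 := by
  rw [ramp, max_eq_left (by linarith), min_eq_right zero_le_one]

theorem indicator_Ioi_id_le_ramp_mul_min {K L : ℝ} (hK : 0 ≤ K) (hKL : K + 1 ≤ L) (r : ℝ) :
    (Ioi L).indicator id r ≤ ramp K r * min r (r ^ 2) := by
  rcases le_or_gt r L with hrL | hrL
  · rw [indicator_of_notMem (show r ∉ Ioi L from not_lt.2 hrL)]
    rcases le_or_gt r K with hrK | hrK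
    · rw [ramp_of_le hrK, zero_mul]
    · exact mul_nonneg (ramp_nonneg K r) (le_min (by linarith) (sq_nonneg r))
  · have hramp : ramp K r = 1 := by
      rw [ramp, max_eq_right (by linarith), min_eq_left (by linarith)]
    rw [indicator_of_mem (show r ∈ Ioi L from hrL), id, hramp, one_mul,
      min_eq_left (by nlinarith)]

theorem setIntegral_Ioc_ite_le (g : ℝ → ℝ) {a y : ℝ} (hy0 : 0 ≤ y) (hya : y ≤ a) :
    ∫ u in Ioc 0 a, g (if u ≤ y then 1 else 0) = y * g 1 + (a - y) * g 0 := by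
  have h1 : EqOn (fun u => g (if u ≤ y then 1 else 0)) (fun _ => g 1) (Ioc 0 y) :=
    fun u hu => by simp only [if_pos hu.2]
  have h0 : EqOn (fun u => g (if u ≤ y then 1 else 0)) (fun _ => g 0) (Ioc y a) :=
    fun u hu => by simp only [if_neg (not_le.2 hu.1)]
  rw [← Ioc_union_Ioc_eq_Ioc hy0 hya,
    setIntegral_union (Ioc_disjoint_Ioc_of_le le_rfl) measurableSet_Ioc
      ((integrableOn_const measure_Ioc_lt_top.ne).congr_fun h1.symm measurableSet_Ioc)
      ((integrableOn_const measure_Ioc_lt_top.ne).congr_fun h0.symm measurableSet_Ioc),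
    setIntegral_congr_fun measurableSet_Ioc h1, setIntegral_congr_fun measurableSet_Ioc h0,
    setIntegral_const, setIntegral_const, Real.volume_real_Ioc_of_le hy0,
    Real.volume_real_Ioc_of_le hya, sub_zero, smul_eq_mul, smul_eq_mul]

/-- `betaChar h` is `drift (fun x => x - h x)` by definition. -/
noncomputable def drift (F : ℝ → ℝ) (ν : Measure ℝ) (a y : ℝ) : ℝ :=
  -∫ r, (∫ u in Ioc (0 : ℝ) a, F (r * ((if u ≤ y then (1 : ℝ) else 0) - y / a))) ∂ν

theorem drift_eq {F : ℝ → ℝ} {ν : Measure ℝ} {a y : ℝ} (hy0 : 0 ≤ y) (hya : y ≤ a)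
    (h1 : Integrable (fun r => F (r * (1 - y / a))) ν)
    (h0 : Integrable (fun r => F (r * -(y / a))) ν) :
    drift F ν a y = -(y * ∫ r, F (r * (1 - y / a)) ∂ν + (a - y) * ∫ r, F (r * -(y / a)) ∂ν) := by
  have hinner := fun r => setIntegral_Ioc_ite_le (fun v => F (r * (v - y / a))) hy0 hya
  simp only [zero_sub] at hinner
  simp only [drift, hinner]
  rw [integral_add (h1.const_mul y) (h0.const_mul (a - y)), integral_const_mul, integral_const_mul]

section Residual

variable {F : ℝ → ℝ} {δ : ℝ} {ν : Measure ℝ}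

theorem abs_comp_mul_le_indicator (hF : LipschitzWith 1 F) (hδ : 0 ≤ δ)
    (hFδ : ∀ x, |x| ≤ δ → F x = 0) {r s L : ℝ} (hr : 0 ≤ r) (hsL : |s| * L ≤ δ) :
    |F (r * s)| ≤ |s| * (Ioi L).indicator id r := by
  rcases le_or_gt r L with hrL | hrL
  · have : |r * s| ≤ δ := by
      rw [abs_mul, abs_of_nonneg hr]; nlinarith [abs_nonneg s]
    rw [hFδ _ this, abs_zero]
    exact mul_nonneg (abs_nonneg s) (indicator_apply_nonneg fun _ => hr)
  · have hF0 : |F (r * s) - F 0| ≤ |r * s - 0| := by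
      simpa [Real.dist_eq] using hF.dist_le_mul (r * s) 0
    rw [hFδ 0 (by simpa using hδ), sub_zero, sub_zero, abs_mul, abs_of_nonneg hr] at hF0
    rw [indicator_of_mem (show r ∈ Ioi L from hrL), id]
    exact hF0.trans_eq (mul_comm _ _)

theorem abs_comp_mul_one_sub_sub_le (hF : LipschitzWith 1 F)
    (hFδ : ∀ x, |x| ≤ δ → F x = 0) {r t : ℝ} (hr : 0 ≤ r) (ht0 : 0 ≤ t) (ht1 : t ≤ 1) :
    |F (r * (1 - t)) - F r| ≤ t * (Ioi δ).indicator id r := by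
  rcases le_or_gt r δ with hrδ | hrδ
  · have h1 : |r * (1 - t)| ≤ δ := by
      rw [abs_of_nonneg (by nlinarith)]; nlinarith
    rw [hFδ _ h1, hFδ r (by rwa [abs_of_nonneg hr]), sub_zero, abs_zero]
    exact mul_nonneg ht0 (indicator_apply_nonneg fun _ => hr)
  · have hlip : |F (r * (1 - t)) - F r| ≤ |r * (1 - t) - r| := by
      simpa [Real.dist_eq] using hF.dist_le_mul (r * (1 - t)) r
    rw [indicator_of_mem (show r ∈ Ioi δ from hrδ), id]
    refine hlip.trans_eq ?_
    rw [show r * (1 - t) - r = -(t * r) by ring, abs_neg, abs_of_nonneg (mul_nonneg ht0 hr)]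

theorem abs_integral_comp_mul_le (hF : LipschitzWith 1 F) (hδ : 0 ≤ δ)
    (hFδ : ∀ x, |x| ≤ δ → F x = 0) (hν : ∀ᵐ r ∂ν, 0 ≤ r) {s L : ℝ}
    (hind : Integrable ((Ioi L).indicator id) ν) (hsL : |s| * L ≤ δ) :
    |∫ r, F (r * s) ∂ν| ≤ |s| * ∫ r in Ioi L, r ∂ν := by
  rw [← integral_indicator measurableSet_Ioi, ← integral_const_mul]
  exact norm_integral_le_of_norm_le (f := fun r => F (r * s)) (hind.const_mul _)
    (hν.mono fun r hr => abs_comp_mul_le_indicator hF hδ hFδ hr hsL)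

theorem integrable_comp_mul (hF : LipschitzWith 1 F) (hδ : 0 < δ)
    (hFδ : ∀ x, |x| ≤ δ → F x = 0) (hν : ∀ᵐ r ∂ν, 0 ≤ r)
    (hsq : Integrable (fun r => r ^ 2) ν) {s : ℝ} (hs : |s| ≤ 1) :
    Integrable (fun r => F (r * s)) ν :=
  ((integrable_indicator_Ioi_id hδ hsq).const_mul |s|).mono'
    (hF.continuous.comp (continuous_mul_const s)).aestronglyMeasurable
    (hν.mono fun r hr => abs_comp_mul_le_indicator hF hδ.le hFδ hr
      (by nlinarith [abs_nonneg s]))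

theorem abs_drift_le (hF : LipschitzWith 1 F) (hδ : 0 < δ)
    (hFδ : ∀ x, |x| ≤ δ → F x = 0) (hν : ∀ᵐ r ∂ν, 0 ≤ r)
    (hsq : Integrable (fun r => r ^ 2) ν) {a y : ℝ} (ha : 0 < a) (hy0 : 0 ≤ y) (hya : y ≤ a) :
    |drift F ν a y| ≤ 2 * y * ∫ r in Ioi δ, r ∂ν := by
  have ht0 : 0 ≤ y / a := div_nonneg hy0 ha.le
  have ht1 : y / a ≤ 1 := (div_le_one ha).2 hya
  have hs1 : |1 - y / a| ≤ 1 := by rw [abs_le]; constructor <;> linarith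
  have hs0 : |-(y / a)| ≤ 1 := by rwa [abs_neg, abs_of_nonneg ht0]
  have hind := integrable_indicator_Ioi_id hδ hsq
  have hR : 0 ≤ ∫ r in Ioi δ, r ∂ν :=
    setIntegral_nonneg measurableSet_Ioi fun r hr => hδ.le.trans (le_of_lt hr)
  have hA1 := abs_integral_comp_mul_le hF hδ.le hFδ hν hind (by nlinarith [hs1])
  have hA0 := abs_integral_comp_mul_le hF hδ.le hFδ hν hind (by nlinarith [hs0])
  rw [abs_neg, abs_of_nonneg ht0] at hA0
  rw [drift_eq hy0 hya (integrable_comp_mul hF hδ hFδ hν hsq hs1)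
    (integrable_comp_mul hF hδ hFδ hν hsq hs0), abs_neg]
  calc _ ≤ y * |∫ r, F (r * (1 - y / a)) ∂ν| + (a - y) * |∫ r, F (r * -(y / a)) ∂ν| := by
        refine (abs_add_le _ _).trans_eq ?_
        rw [abs_mul, abs_mul, abs_of_nonneg hy0, abs_of_nonneg (sub_nonneg.2 hya)]
    _ ≤ y * (1 * ∫ r in Ioi δ, r ∂ν) + (a - y) * (y / a * ∫ r in Ioi δ, r ∂ν) := by
        gcongr
        exact hA1.trans (by gcongr)
    _ ≤ 2 * y * ∫ r in Ioi δ, r ∂ν := by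
        have : (a - y) * (y / a) ≤ y := by
          rw [mul_div_assoc', div_le_iff₀ ha]; nlinarith
        nlinarith

theorem abs_integral_comp_mul_one_sub_sub_le (hF : LipschitzWith 1 F) (hδ : 0 < δ)
    (hFδ : ∀ x, |x| ≤ δ → F x = 0) (hν : ∀ᵐ r ∂ν, 0 ≤ r)
    (hsq : Integrable (fun r => r ^ 2) ν) {t : ℝ} (ht0 : 0 ≤ t) (ht1 : t ≤ 1) :
    |∫ r, F (r * (1 - t)) ∂ν - ∫ r, F r ∂ν| ≤ t * ∫ r in Ioi δ, r ∂ν := by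
  have hint : Integrable F ν := by
    simpa using integrable_comp_mul hF hδ hFδ hν hsq (s := 1) (by simp)
  rw [← integral_sub (integrable_comp_mul hF hδ hFδ hν hsq
      (by rw [abs_le]; constructor <;> linarith)) hint,
    ← integral_indicator measurableSet_Ioi, ← integral_const_mul]
  exact norm_integral_le_of_norm_le (f := fun r => F (r * (1 - t)) - F r)
    ((integrable_indicator_Ioi_id hδ hsq).const_mul _)
    (hν.mono fun r hr => abs_comp_mul_one_sub_sub_le hF hFδ hr ht0 ht1)

theorem sub_mul_abs_integral_comp_mul_neg_le (hF : LipschitzWith 1 F) (hδ : 0 < δ)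
    (hFδ : ∀ x, |x| ≤ δ → F x = 0) (hν : ∀ᵐ r ∂ν, 0 ≤ r)
    (hsq : Integrable (fun r => r ^ 2) ν) {M a y : ℝ} (hM : 0 < M) (ha : 0 < a)
    (hy0 : 0 ≤ y) (hyM : y ≤ M) (hya : y ≤ a) :
    (a - y) * |∫ r, F (r * -(y / a)) ∂ν| ≤ M * ∫ r in Ioi (δ * a / M), r ∂ν := by
  have hs : |-(y / a)| = y / a := by rw [abs_neg, abs_of_nonneg (div_nonneg hy0 ha.le)]
  have hL : 0 < δ * a / M := by positivity
  have hT : 0 ≤ ∫ r in Ioi (δ * a / M), r ∂ν :=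
    setIntegral_nonneg measurableSet_Ioi fun r hr => hL.le.trans (le_of_lt hr)
  have hA := abs_integral_comp_mul_le hF hδ.le hFδ hν (integrable_indicator_Ioi_id hL hsq)
    (s := -(y / a)) (by
      calc |-(y / a)| * (δ * a / M) = δ * (y / M) := by rw [hs]; field_simp
        _ ≤ δ := mul_le_of_le_one_right hδ.le ((div_le_one hM).2 hyM))
  rw [hs] at hA
  calc (a - y) * |∫ r, F (r * -(y / a)) ∂ν|
      ≤ (a - y) * (y / a) * ∫ r in Ioi (δ * a / M), r ∂ν := by
        rw [mul_assoc]; gcongr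
    _ ≤ M * ∫ r in Ioi (δ * a / M), r ∂ν := by
        gcongr
        rw [mul_div_assoc', div_le_iff₀ ha]; nlinarith

theorem abs_drift_add_mul_le (hF : LipschitzWith 1 F) (hδ : 0 < δ)
    (hFδ : ∀ x, |x| ≤ δ → F x = 0) (hν : ∀ᵐ r ∂ν, 0 ≤ r)
    (hsq : Integrable (fun r => r ^ 2) ν) {M a y I : ℝ} (hM : 0 < M) (hMa : M ≤ a)
    (hy0 : 0 ≤ y) (hyM : y ≤ M) :
    |drift F ν a y + y * I| ≤ M * |∫ r, F r ∂ν - I| + M ^ 2 / a * ∫ r in Ioi δ, r ∂ν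
      + M * ∫ r in Ioi (δ * a / M), r ∂ν := by
  have ha : 0 < a := hM.trans_le hMa
  have hya : y ≤ a := hyM.trans hMa
  have ht0 : 0 ≤ y / a := div_nonneg hy0 ha.le
  have ht1 : y / a ≤ 1 := (div_le_one ha).2 hya
  have hR : 0 ≤ ∫ r in Ioi δ, r ∂ν :=
    setIntegral_nonneg measurableSet_Ioi fun r hr => hδ.le.trans (le_of_lt hr)
  have hlip := abs_integral_comp_mul_one_sub_sub_le hF hδ hFδ hν hsq ht0 ht1
  have htail := sub_mul_abs_integral_comp_mul_neg_le hF hδ hFδ hν hsq hM ha hy0 hyM hya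
  have hy2 : y * (y / a) ≤ M ^ 2 / a := by rw [mul_div_assoc', sq]; gcongr
  rw [drift_eq hy0 hya (integrable_comp_mul hF hδ hFδ hν hsq
      (by rw [abs_le]; constructor <;> linarith))
    (integrable_comp_mul hF hδ hFδ hν hsq (by rwa [abs_neg, abs_of_nonneg ht0]))]
  set A1 := ∫ r, F (r * (1 - y / a)) ∂ν
  set A0 := ∫ r, F r ∂ν
  set A2 := ∫ r, F (r * -(y / a)) ∂ν
  calc |-(y * A1 + (a - y) * A2) + y * I|
      = |y * (A0 - I) + y * (A1 - A0) + (a - y) * A2| := by rw [← abs_neg]; ring_nf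
    _ ≤ y * |A0 - I| + y * |A1 - A0| + (a - y) * |A2| := by
        refine (abs_add_three _ _ _).trans_eq ?_
        rw [abs_mul, abs_mul, abs_mul, abs_of_nonneg hy0, abs_of_nonneg (sub_nonneg.2 hya)]
    _ ≤ M * |A0 - I| + y * (y / a) * ∫ r in Ioi δ, r ∂ν + M * ∫ r in Ioi (δ * a / M), r ∂ν := by
        rw [mul_assoc y]; gcongr
    _ ≤ M * |A0 - I| + M ^ 2 / a * ∫ r in Ioi δ, r ∂ν + M * ∫ r in Ioi (δ * a / M), r ∂ν := by
        gcongr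

end Residual

theorem tendsto_integral_ramp_mul {μ : Measure ℝ} {g : ℝ → ℝ} (hg : Integrable g μ) :
    Tendsto (fun K : ℕ => ∫ r, ramp K r * g r ∂μ) atTop (𝓝 0) := by
  have hlim : ∀ r, Tendsto (fun K : ℕ => ramp K r * g r) atTop (𝓝 0) := fun r =>
    tendsto_const_nhds.congr' <| (eventually_ge_atTop ⌈r⌉₊).mono fun K hK =>
      show (0 : ℝ) = ramp K r * g r by
        rw [ramp_of_le ((Nat.le_ceil r).trans (by exact_mod_cast hK)), zero_mul]
  simpa using tendsto_integral_of_dominated_convergence (fun r => |g r|)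
    (fun K => ((continuous_ramp K).aestronglyMeasurable.mul hg.aestronglyMeasurable)) hg.abs
    (fun K => ae_of_all _ fun r => by
      rw [Real.norm_eq_abs, Pi.mul_apply, abs_mul, abs_of_nonneg (ramp_nonneg K r)]
      exact mul_le_of_le_one_left (abs_nonneg _) (ramp_le_one K r))
    (ae_of_all _ hlim)

def AssumptionH (ν : ℝ → Measure ℝ) (π : Measure ℝ) : Prop :=
  ∀ f : ℝ → ℝ, ContinuousOn f (Ioi 0) → (∃ C : ℝ, ∀ x ∈ Ioi (0 : ℝ), |f x| ≤ C) →
    Tendsto (fun a => ∫ r in Ioi (0 : ℝ), f r * min r (r ^ 2) ∂(ν a)) atTop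
      (nhds (∫ r in Ioi (0 : ℝ), f r * min r (r ^ 2) ∂π))

namespace AssumptionH

variable {ν : ℝ → Measure ℝ} {π : Measure ℝ}

theorem tendsto_setIntegral (hH : AssumptionH ν π) {g : ℝ → ℝ}
    (hg : ContinuousOn g (Ioi 0)) {C : ℝ} (hC : ∀ r ∈ Ioi (0 : ℝ), |g r| ≤ C * min r (r ^ 2)) :
    Tendsto (fun a => ∫ r in Ioi 0, g r ∂(ν a)) atTop (𝓝 (∫ r in Ioi 0, g r ∂π)) := by
  have hmin : ∀ r ∈ Ioi (0 : ℝ), 0 < min r (r ^ 2) := fun r hr =>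
    lt_min hr (pow_pos hr 2)
  have hcancel : ∀ μ : Measure ℝ,
      ∫ r in Ioi 0, g r / min r (r ^ 2) * min r (r ^ 2) ∂μ = ∫ r in Ioi 0, g r ∂μ :=
    fun μ => setIntegral_congr_fun measurableSet_Ioi fun r hr =>
      div_mul_cancel₀ _ (hmin r hr).ne'
  simpa only [hcancel] using hH (fun r => g r / min r (r ^ 2))
    (hg.div (by fun_prop) fun r hr => (hmin r hr).ne')
    ⟨C, fun r hr => by rw [abs_div, abs_of_pos (hmin r hr), div_le_iff₀ (hmin r hr)]; exact hC r hr⟩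

theorem tendsto_setIntegral_Ioi_id (hH : AssumptionH ν π)
    (hπ : IntegrableOn (fun r => min r (r ^ 2)) (Ioi 0) π)
    (hν : ∀ᶠ a in atTop, IntegrableOn (fun r => min r (r ^ 2)) (Ioi 0) (ν a))
    {L : ℝ → ℝ} (hL : Tendsto L atTop atTop) :
    Tendsto (fun a => ∫ r in Ioi (L a), r ∂(ν a)) atTop (𝓝 0) := by
  refine tendsto_order.2 ⟨fun b hb => ?_, fun ε hε => ?_⟩
  · filter_upwards [hL.eventually_ge_atTop 0] with a ha
    exact hb.trans_le (setIntegral_nonneg measurableSet_Ioi fun r hr => ha.trans (le_of_lt hr))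
  obtain ⟨K, hK⟩ := ((tendsto_integral_ramp_mul hπ).eventually_lt_const hε).exists
  have hνK := hH (ramp K) (continuous_ramp K).continuousOn
    ⟨1, fun r _ => by rw [abs_of_nonneg (ramp_nonneg K r)]; exact ramp_le_one K r⟩
  filter_upwards [hνK.eventually_lt_const hK, hν, hL.eventually_ge_atTop (K + 1)]
    with a hlt hint hLa
  have hL0 : 0 ≤ L a := by linarith [K.cast_nonneg (α := ℝ)]
  calc ∫ r in Ioi (L a), r ∂(ν a)
      = ∫ r in Ioi 0, (Ioi (L a)).indicator id r ∂(ν a) := by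
        rw [setIntegral_indicator measurableSet_Ioi, inter_eq_right.2 (Ioi_subset_Ioi hL0)]; rfl
    _ ≤ ∫ r in Ioi 0, ramp K r * min r (r ^ 2) ∂(ν a) :=
        integral_mono_of_nonneg
          (ae_of_all _ fun r => indicator_apply_nonneg fun hr => hL0.trans (le_of_lt hr))
          (hint.bdd_mul (continuous_ramp K).aestronglyMeasurable (c := 1) (ae_of_all _ fun r => by
            rw [Real.norm_eq_abs, abs_of_nonneg (ramp_nonneg K r)]; exact ramp_le_one K r))
          (ae_of_all _ (indicator_Ioi_id_le_ramp_mul_min K.cast_nonneg hLa))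
    _ < ε := hlt

theorem tendsto_integral_of_lipschitzWith (hH : AssumptionH ν π) {F : ℝ → ℝ} {δ : ℝ}
    (hF : LipschitzWith 1 F) (hδ : 0 < δ) (hFδ : ∀ x, |x| ≤ δ → F x = 0)
    (hν : ∀ᶠ a in atTop, ∀ᵐ r ∂(ν a), 0 < r) :
    Tendsto (fun a => ∫ r, F r ∂(ν a)) atTop (𝓝 (∫ r in Ioi 0, F r ∂π)) := by
  refine (hH.tendsto_setIntegral hF.continuous.continuousOn (C := 1 / min 1 δ)
    fun r hr => ?_).congr' (hν.mono fun a ha => by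
      rw [Measure.restrict_eq_self_of_ae_mem (s := Ioi 0) ha])
  have := abs_comp_mul_le_indicator hF hδ.le hFδ (le_of_lt hr) (s := 1) (L := δ) (by simp)
  rw [mul_one, abs_one, one_mul] at this
  exact this.trans ((indicator_Ioi_id_le_min_div hδ (le_of_lt hr)).trans_eq (by ring))

theorem isBoundedUnder_setIntegral_Ioi (hH : AssumptionH ν π) {δ : ℝ} (hδ : 0 < δ)
    (hν : ∀ᶠ a in atTop, ∀ᵐ r ∂(ν a), 0 < r)
    (hsq : ∀ᶠ a in atTop, Integrable (fun r => r ^ 2) (ν a)) :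
    IsBoundedUnder (· ≤ ·) atTop (fun a => ‖∫ r in Ioi δ, r ∂(ν a)‖) := by
  have hm : Tendsto (fun a => ∫ r in Ioi 0, min r (r ^ 2) ∂(ν a)) atTop
      (𝓝 (∫ r in Ioi 0, min r (r ^ 2) ∂π)) := by
    simpa using hH (fun _ => 1) continuousOn_const ⟨1, fun _ _ => by simp⟩
  refine isBoundedUnder_of_eventually_le (a := (∫ r in Ioi 0, min r (r ^ 2) ∂π + 1) / min 1 δ) ?_
  filter_upwards [hm.eventually_lt_const (lt_add_one _), hν, hsq] with a hlt hpos hint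
  have hnn : ∀ᵐ r ∂(ν a), 0 ≤ r := hpos.mono fun r hr => hr.le
  rw [Real.norm_eq_abs, abs_of_nonneg
    (setIntegral_nonneg measurableSet_Ioi fun r hr => hδ.le.trans (le_of_lt hr))]
  calc ∫ r in Ioi δ, r ∂(ν a)
      = ∫ r, (Ioi δ).indicator id r ∂(ν a) := (integral_indicator measurableSet_Ioi).symm
    _ ≤ ∫ r, min r (r ^ 2) / min 1 δ ∂(ν a) :=
        integral_mono_of_nonneg (hnn.mono fun r hr => indicator_apply_nonneg fun _ => hr)
          ((integrable_min_sq hnn hint).div_const _)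
          (hnn.mono fun r hr => indicator_Ioi_id_le_min_div hδ hr)
    _ ≤ (∫ r in Ioi 0, min r (r ^ 2) ∂π + 1) / min 1 δ := by
        rw [integral_div, ← Measure.restrict_eq_self_of_ae_mem (s := Ioi 0) hpos]
        exact div_le_div_of_nonneg_right hlt.le (lt_min one_pos hδ).le

theorem tendsto_drift_error_bound (hH : AssumptionH ν π) {F : ℝ → ℝ} {δ M : ℝ}
    (hF : LipschitzWith 1 F) (hδ : 0 < δ) (hFδ : ∀ x, |x| ≤ δ → F x = 0)
    (hπ : IntegrableOn (fun r => min r (r ^ 2)) (Ioi 0) π)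
    (hν : ∀ᶠ a in atTop, ∀ᵐ r ∂(ν a), 0 < r)
    (hsq : ∀ᶠ a in atTop, Integrable (fun r => r ^ 2) (ν a)) (hM : 0 < M) :
    Tendsto (fun a => M * |∫ r, F r ∂(ν a) - ∫ r in Ioi 0, F r ∂π|
      + M ^ 2 / a * ∫ r in Ioi δ, r ∂(ν a) + M * ∫ r in Ioi (δ * a / M), r ∂(ν a))
      atTop (𝓝 0) := by
  have hmin : ∀ᶠ a in atTop, IntegrableOn (fun r => min r (r ^ 2)) (Ioi 0) (ν a) :=
    (hν.and hsq).mono fun a ha =>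
      (integrable_min_sq (ha.1.mono fun r hr => hr.le) ha.2).integrableOn
  simpa using ((((hH.tendsto_integral_of_lipschitzWith hF hδ hFδ hν).sub_const
      (∫ r in Ioi 0, F r ∂π)).abs.const_mul M).add
    (((tendsto_const_nhds (x := M ^ 2)).div_atTop tendsto_id).zero_mul_isBoundedUnder_le
      (hH.isBoundedUnder_setIntegral_Ioi hδ hν hsq))).add
    ((hH.tendsto_setIntegral_Ioi_id hπ hmin
      ((tendsto_id.const_mul_atTop hδ).atTop_div_const hM)).const_mul M)

end AssumptionH

theorem tendsto_biSup_abs_of_le {α β : Type*} {l : Filter β} {f : β → α → ℝ} {B : β → ℝ}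
    {s : Set α} (hs : s.Nonempty) (hB : Tendsto B l (𝓝 0))
    (hfB : ∀ᶠ b in l, ∀ y ∈ s, |f b y| ≤ B b) :
    Tendsto (fun b => ⨆ y ∈ s, |f b y|) l (𝓝 0) := by
  refine tendsto_of_tendsto_of_tendsto_of_le_of_le' tendsto_const_nhds hB
    (Eventually.of_forall fun b => Real.iSup_nonneg fun y => Real.iSup_nonneg fun _ =>
      abs_nonneg _) (hfB.mono fun b hb => ?_)
  obtain ⟨y₀, hy₀⟩ := hs
  have hB0 : 0 ≤ B b := (abs_nonneg _).trans (hb y₀ hy₀)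
  exact Real.iSup_le (fun y => Real.iSup_le (hb y) hB0) hB0

theorem stmt12_general
    (δ : ℝ) (hδ : 0 < δ) (h : ℝ → ℝ)
    (h_mono : Monotone h) (h_lip : LipschitzWith 1 h)
    (h_id : ∀ x : ℝ, |x| ≤ δ → h x = x)
    (π : Measure ℝ)
    (hπmom : ∫⁻ r, ENNReal.ofReal (min r (r ^ 2)) ∂π < ⊤)
    (ν : ℝ → Measure ℝ)
    (hνsupp : ∀ a : ℝ, 0 < a → (ν a) (Set.Ioc 0 a)ᶜ = 0)
    (hνmom : ∀ a : ℝ, 0 < a → ∫⁻ r, ENNReal.ofReal (r ^ 2) ∂(ν a) < ⊤)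
    (hH : ∀ f : ℝ → ℝ, ContinuousOn f (Set.Ioi 0) →
      (∃ C : ℝ, ∀ x ∈ Set.Ioi (0 : ℝ), |f x| ≤ C) →
      Tendsto (fun a => ∫ r in Set.Ioi (0 : ℝ), f r * min r (r ^ 2) ∂(ν a))
        atTop
        (nhds (∫ r in Set.Ioi (0 : ℝ), f r * min r (r ^ 2) ∂π))) :
    (∀ a : ℝ, 0 < a → ∀ y : ℝ, 0 ≤ y → y ≤ a →
      |betaChar h (ν a) a y| ≤ 2 * y * ∫ r in Set.Ioi δ, r ∂(ν a)) ∧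
    (∀ M : ℝ, 0 < M →
      Tendsto
        (fun a : ℝ => ⨆ y ∈ Set.Icc (0 : ℝ) M,
          |betaChar h (ν a) a y + y * ∫ r in Set.Ioi (0 : ℝ), (r - h r) ∂π|)
        atTop (nhds 0)) := by
  replace hH : AssumptionH ν π := hH
  have hF : LipschitzWith 1 (fun x => x - h x) := h_lip.id_sub_of_monotone h_mono
  have hFδ : ∀ x, |x| ≤ δ → x - h x = 0 := fun x hx => by rw [h_id x hx, sub_self]
  have hνpos : ∀ a, 0 < a → ∀ᵐ r ∂(ν a), 0 < r := fun a ha =>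
    (show ∀ᵐ r ∂(ν a), r ∈ Ioc 0 a from mem_ae_iff.2 (hνsupp a ha)).mono fun r hr => hr.1
  have hsq : ∀ a, 0 < a → Integrable (fun r => r ^ 2) (ν a) := fun a ha =>
    integrable_sq_of_lintegral_lt_top (hνmom a ha)
  refine ⟨fun a ha y hy0 hya => abs_drift_le hF hδ hFδ ((hνpos a ha).mono fun r hr => hr.le)
    (hsq a ha) ha hy0 hya, fun M hM => ?_⟩
  refine tendsto_biSup_abs_of_le ⟨0, le_rfl, hM.le⟩
    (hH.tendsto_drift_error_bound hF hδ hFδ (integrableOn_Ioi_min_sq_of_lintegral_lt_top hπmom)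
      ((eventually_gt_atTop 0).mono hνpos) ((eventually_gt_atTop 0).mono hsq) hM) ?_
  filter_upwards [eventually_ge_atTop M] with a hMa y hy
  have ha : 0 < a := hM.trans_le hMa
  exact abs_drift_add_mul_le hF hδ hFδ ((hνpos a ha).mono fun r hr => hr.le) (hsq a ha)
    hM hMa hy.1 hy.2

/-- With `h` a truncation function and `(ν^{(a)})` satisfying
Assumption (H): (i) `|β_a(y)| ≤ 2y ∫ r 1_{r>δ} ν^{(a)}(dr)` for `0 ≤ y ≤ a`;
(ii) `β_a(y) → -y ∫ (r - h(r)) π(dr)` uniformly on `0 ≤ y ≤ M` as `a → ∞`. -/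
theorem stmt12
    (δ : ℝ) (hδ : 0 < δ) (h : ℝ → ℝ)
    (h_mono : Monotone h) (h_lip : LipschitzWith 1 h)
    (h_bdd : ∀ x : ℝ, |h x| ≤ min |x| 1)
    (h_id : ∀ x : ℝ, |x| ≤ δ → h x = x)
    (π : Measure ℝ) (hπsupp : π (Set.Ioi 0)ᶜ = 0)
    (hπmom : ∫⁻ r, ENNReal.ofReal (min r (r ^ 2)) ∂π < ⊤)
    (ν : ℝ → Measure ℝ)
    (hνsupp : ∀ a : ℝ, 0 < a → (ν a) (Set.Ioc 0 a)ᶜ = 0)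
    (hνmom : ∀ a : ℝ, 0 < a → ∫⁻ r, ENNReal.ofReal (r ^ 2) ∂(ν a) < ⊤)
    (hH : ∀ f : ℝ → ℝ, ContinuousOn f (Set.Ioi 0) →
      (∃ C : ℝ, ∀ x ∈ Set.Ioi (0 : ℝ), |f x| ≤ C) →
      Tendsto (fun a => ∫ r in Set.Ioi (0 : ℝ), f r * min r (r ^ 2) ∂(ν a))
        atTop
        (nhds (∫ r in Set.Ioi (0 : ℝ), f r * min r (r ^ 2) ∂π))) :
    (∀ a : ℝ, 0 < a → ∀ y : ℝ, 0 ≤ y → y ≤ a →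
      |betaChar h (ν a) a y| ≤ 2 * y * ∫ r in Set.Ioi δ, r ∂(ν a)) ∧
    (∀ M : ℝ, 0 < M →
      Tendsto
        (fun a : ℝ => ⨆ y ∈ Set.Icc (0 : ℝ) M,
          |betaChar h (ν a) a y + y * ∫ r in Set.Ioi (0 : ℝ), (r - h r) ∂π|)
        atTop (nhds 0)) :=
  stmt12_general δ hδ h h_mono h_lip h_id π hπmom ν hνsupp hνmom hH
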